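/- Assume n ≥ 3, p ∈ (1,2], q > p−1, β > 0, 0 ≤ −a < pβ < n, and q > (n+a)(p−1)/(n−pβ). Let u be a positive solution of the integral equation (IE). Then for every θ < (pβ+a)/(q−p+1) there do NOT exist constants C > 0 and M > 0 such that u(x) ≥ C|x|^{−θ} for all |x| ≥ M; that is, the decay of u at infinity cannot be slower than the slow rate (pβ+a)/(q−p+1). -/

import Mathlib

/-!
If `u ≥ C|x|^{-θ}` near infinity, then on the annulus `t/4 ≤ |y| ≤ t/2` the nonlinearity
`|y|^a u^q` is `≳ t^{a-θq}`, so the Wolff integrand at every scale `t ≥ 2|x|` is `≳ t^{γ-1}`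
with `γ = (pβ + a - θq)/(p-1)`. Integrating over `t ∈ (2|x|, 3|x|)` and using `R ≥ 1/C` gives
`u(x) ≳ |x|^γ`: the rate improves from `θ` to `(θq - pβ - a)/(p-1)`. This affine map has slope
`q/(p-1) > 1` and fixed point `(pβ+a)/(q-p+1)`, so iterating it from below the fixed point drives
the rate to `-∞`. Once `γ ≥ 1` the integrand is `≳ 1` at all large scales, so `W(0) = ∞`,
contradicting the finiteness of the potential.
-/

open MeasureTheory Metric Set Filter ENNReal

/-- The Wolff potential `W_{β,p}(f)(x)`. -/
noncomputable def wolff (n : ℕ) (β p : ℝ) (f : EuclideanSpace ℝ (Fin n) → ℝ)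
    (x : EuclideanSpace ℝ (Fin n)) : ℝ≥0∞ :=
  ∫⁻ t in Set.Ioi (0 : ℝ),
    ((ENNReal.ofReal (t ^ (p * β - (n : ℝ))) *
        ∫⁻ y in Metric.ball x t, ENNReal.ofReal (f y)) ^ (1 / (p - 1))) /
      ENNReal.ofReal t

/-- `R` is double bounded: `1/C ≤ R x ≤ C` for some `C > 0`. -/
def DoubleBounded {α : Type*} (R : α → ℝ) : Prop :=
  ∃ C : ℝ, 0 < C ∧ ∀ x, 1 / C ≤ R x ∧ R x ≤ C

/-- `u` is a positive (continuous) solution of the integral equation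
`u(x) = R(x)·W_{β,p}(|·|^a u^q)(x)`, with finite Wolff potential. -/
def IsIESolutionWith (n : ℕ) (β p a q : ℝ)
    (R u : EuclideanSpace ℝ (Fin n) → ℝ) : Prop :=
  Continuous u ∧ (∀ x, 0 < u x) ∧
  ∀ x, wolff n β p (fun y => ‖y‖ ^ a * u y ^ q) x ≠ ∞ ∧
    u x = R x * (wolff n β p (fun y => ‖y‖ ^ a * u y ^ q) x).toReal

lemma min_rpow_mul_le_rpow {k₁ k₂ r s e : ℝ} (hk₁ : 0 < k₁) (hr : 0 < r)
    (h₁ : k₁ * r ≤ s) (h₂ : s ≤ k₂ * r) : min (k₁ ^ e) (k₂ ^ e) * r ^ e ≤ s ^ e := by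
  have hs : 0 < s := lt_of_lt_of_le (by positivity) h₁
  rw [min_mul_of_nonneg _ _ (Real.rpow_nonneg hr.le e), ← Real.mul_rpow hk₁.le hr.le,
    ← Real.mul_rpow (by nlinarith) hr.le]
  rcases le_total 0 e with he | he
  · exact (min_le_left _ _).trans (Real.rpow_le_rpow (by positivity) h₁ he)
  · exact (min_le_right _ _).trans (Real.rpow_le_rpow_of_nonpos hs h₂ he)

lemma exists_ball_subset_ball_inter_annulus {F : Type*} [NormedAddCommGroup F]
    [NormedSpace ℝ F] [Nontrivial F] {x : F} {t : ℝ} (ht : 0 < t) (hx : ‖x‖ ≤ t / 2) :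
    ∃ y₀ : F, ball y₀ (t / 16) ⊆ ball x t ∧
      ∀ y ∈ ball y₀ (t / 16), t / 4 ≤ ‖y‖ ∧ ‖y‖ ≤ t / 2 := by
  obtain ⟨y₀, hy₀⟩ := exists_norm_eq F (by positivity : 0 ≤ 3 * t / 8)
  refine ⟨y₀, fun y hy => ?_, fun y hy => ?_⟩
  · rw [mem_ball] at hy ⊢
    have := dist_triangle y y₀ x
    have := dist_le_norm_add_norm y₀ x
    linarith
  · rw [mem_ball, dist_eq_norm] at hy
    have := abs_le.1 ((abs_norm_sub_norm_le y y₀).trans hy.le)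
    constructor <;> linarith

noncomputable def wolffIntegrand (n : ℕ) (β p : ℝ) (f : EuclideanSpace ℝ (Fin n) → ℝ)
    (x : EuclideanSpace ℝ (Fin n)) (t : ℝ) : ℝ≥0∞ :=
  ((ENNReal.ofReal (t ^ (p * β - (n : ℝ))) *
      ∫⁻ y in ball x t, ENNReal.ofReal (f y)) ^ (1 / (p - 1))) / ENNReal.ofReal t

lemma le_wolff_of_le_wolffIntegrand {n : ℕ} {β p : ℝ} {f : EuclideanSpace ℝ (Fin n) → ℝ}
    {x : EuclideanSpace ℝ (Fin n)} {S : Set ℝ} (hS : MeasurableSet S) (hS₀ : S ⊆ Ioi 0)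
    {k : ℝ≥0∞} (hk : ∀ t ∈ S, k ≤ wolffIntegrand n β p f x t) :
    k * volume S ≤ wolff n β p f x :=
  calc k * volume S = ∫⁻ _ in S, k := (setLIntegral_const S k).symm
    _ ≤ ∫⁻ t in S, wolffIntegrand n β p f x t := setLIntegral_mono' hS hk
    _ ≤ wolff n β p f x := lintegral_mono_set hS₀

lemma exists_volume_ball_eq (n : ℕ) : ∃ ω : ℝ, 0 < ω ∧ ∀ (y : EuclideanSpace ℝ (Fin n)) (r : ℝ),
    0 < r → volume (ball y r) = ENNReal.ofReal (ω * r ^ n) := by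
  refine ⟨(volume (ball (0 : EuclideanSpace ℝ (Fin n)) 1)).toReal,
    ENNReal.toReal_pos (measure_ball_pos volume _ one_pos).ne' measure_ball_lt_top.ne,
    fun y r hr => ?_⟩
  rw [Measure.addHaar_ball_of_pos volume y hr, finrank_euclideanSpace_fin, mul_comm,
    ENNReal.ofReal_mul ENNReal.toReal_nonneg, ENNReal.ofReal_toReal measure_ball_lt_top.ne]

lemma exists_le_wolffIntegrand_of_le_rpow_norm {n : ℕ} [NeZero n] {β p : ℝ} (hp : 1 < p)
    {f : EuclideanSpace ℝ (Fin n) → ℝ} {c e M : ℝ} (hc : 0 < c)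
    (hf : ∀ y, M ≤ ‖y‖ → c * ‖y‖ ^ e ≤ f y) :
    ∃ c' > 0, ∀ x t, 0 < t → 4 * M ≤ t → ‖x‖ ≤ t / 2 →
      ENNReal.ofReal (c' * t ^ ((p * β + e) / (p - 1) - 1)) ≤ wolffIntegrand n β p f x t := by
  obtain ⟨ω, hω, hvol⟩ := exists_volume_ball_eq n
  set κ : ℝ := min ((1 / 4) ^ e) ((1 / 2) ^ e)
  have hκ : 0 < κ := by positivity
  have hp₀ : 0 < p - 1 := by linarith
  refine ⟨(c * κ * ω / 16 ^ n) ^ (1 / (p - 1)), by positivity, fun x t ht htM hx => ?_⟩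
  obtain ⟨y₀, hsub, hann⟩ := exists_ball_subset_ball_inter_annulus ht hx
  have hf_ann : ∀ y ∈ ball y₀ (t / 16), c * κ * t ^ e ≤ f y := fun y hy => by
    obtain ⟨h₁, h₂⟩ := hann y hy
    calc c * κ * t ^ e = c * (κ * t ^ e) := mul_assoc _ _ _
      _ ≤ c * ‖y‖ ^ e := by
        gcongr; exact min_rpow_mul_le_rpow (by norm_num) ht (by linarith) (by linarith)
      _ ≤ f y := hf y (by linarith)
  have hmass : ENNReal.ofReal (c * κ * t ^ e * (ω * (t / 16) ^ n)) ≤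
      ∫⁻ y in ball x t, ENNReal.ofReal (f y) :=
    calc ENNReal.ofReal (c * κ * t ^ e * (ω * (t / 16) ^ n))
        = ∫⁻ _ in ball y₀ (t / 16), ENNReal.ofReal (c * κ * t ^ e) := by
          rw [setLIntegral_const, hvol _ _ (by positivity), ENNReal.ofReal_mul (by positivity)]
      _ ≤ ∫⁻ y in ball y₀ (t / 16), ENNReal.ofReal (f y) :=
          setLIntegral_mono' measurableSet_ball fun y hy => ENNReal.ofReal_le_ofReal (hf_ann y hy)
      _ ≤ ∫⁻ y in ball x t, ENNReal.ofReal (f y) := lintegral_mono_set hsub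
  have halg : (t ^ (p * β - n) * (c * κ * t ^ e * (ω * (t / 16) ^ n))) ^ (1 / (p - 1)) / t =
      (c * κ * ω / 16 ^ n) ^ (1 / (p - 1)) * t ^ ((p * β + e) / (p - 1) - 1) := by
    have hinner : t ^ (p * β - n) * (c * κ * t ^ e * (ω * (t / 16) ^ n)) =
        c * κ * ω / 16 ^ n * t ^ (p * β + e) := by
      rw [div_pow, ← Real.rpow_natCast t n, show p * β + e = p * β - n + e + n by ring,
        Real.rpow_add ht, Real.rpow_add ht]
      ring
    rw [hinner, Real.mul_rpow (by positivity) (by positivity), ← Real.rpow_mul ht.le,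
      Real.rpow_sub ht, Real.rpow_one, mul_one_div, mul_div_assoc]
  calc ENNReal.ofReal ((c * κ * ω / 16 ^ n) ^ (1 / (p - 1)) * t ^ ((p * β + e) / (p - 1) - 1))
      = (ENNReal.ofReal (t ^ (p * β - n)) *
          ENNReal.ofReal (c * κ * t ^ e * (ω * (t / 16) ^ n))) ^ (1 / (p - 1)) /
          ENNReal.ofReal t := by
        rw [← ENNReal.ofReal_mul (by positivity), ENNReal.ofReal_rpow_of_nonneg (by positivity)
          (by positivity), ← ENNReal.ofReal_div_of_pos ht, halg]
    _ ≤ wolffIntegrand n β p f x t := by unfold wolffIntegrand; gcongr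

def DecaysNoFasterThan {F : Type*} [Norm F] (u : F → ℝ) (θ : ℝ) : Prop :=
  ∃ C M : ℝ, 0 < C ∧ 0 < M ∧ ∀ x : F, M ≤ ‖x‖ → C * ‖x‖ ^ (-θ) ≤ u x

namespace DecaysNoFasterThan

variable {n : ℕ} {β p a q θ : ℝ} {u : EuclideanSpace ℝ (Fin n) → ℝ}

lemma exists_le_wolffIntegrand [NeZero n] (hp : 1 < p) (hq : 0 < q)
    (h : DecaysNoFasterThan u θ) :
    ∃ c > 0, ∃ T > 0, ∀ x t, T ≤ t → ‖x‖ ≤ t / 2 →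
      ENNReal.ofReal (c * t ^ ((p * β + (a - θ * q)) / (p - 1) - 1)) ≤
        wolffIntegrand n β p (fun y => ‖y‖ ^ a * u y ^ q) x t := by
  obtain ⟨C, M, hC, hM, hlow⟩ := h
  have hf : ∀ y, M ≤ ‖y‖ → C ^ q * ‖y‖ ^ (a - θ * q) ≤ ‖y‖ ^ a * u y ^ q := fun y hy => by
    have hy₀ : 0 < ‖y‖ := hM.trans_le hy
    calc C ^ q * ‖y‖ ^ (a - θ * q) = ‖y‖ ^ a * (C * ‖y‖ ^ (-θ)) ^ q := by
          rw [Real.mul_rpow hC.le (by positivity), ← Real.rpow_mul hy₀.le, sub_eq_add_neg,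
            Real.rpow_add hy₀, neg_mul]
          ring
      _ ≤ ‖y‖ ^ a * u y ^ q := by gcongr; exact hlow y hy
  obtain ⟨c, hc, hint⟩ := exists_le_wolffIntegrand_of_le_rpow_norm (β := β) hp (by positivity) hf
  exact ⟨c, hc, 4 * M, by positivity, fun x t ht hx => hint x t (by linarith) ht hx⟩

lemma wolff_zero_eq_top [NeZero n] (hp : 1 < p) (hq : 0 < q) (h : DecaysNoFasterThan u θ)
    (hθ : p - 1 ≤ p * β + (a - θ * q)) :
    wolff n β p (fun y => ‖y‖ ^ a * u y ^ q) 0 = ∞ := by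
  obtain ⟨c, hc, T, hT, hint⟩ := h.exists_le_wolffIntegrand (β := β) (a := a) hp hq
  have hγ : 0 ≤ (p * β + (a - θ * q)) / (p - 1) - 1 := by
    rw [sub_nonneg, one_le_div (by linarith)]; exact hθ
  have hS : ∀ t ∈ Ioi (max T 1), ENNReal.ofReal c ≤
      wolffIntegrand n β p (fun y => ‖y‖ ^ a * u y ^ q) 0 t := fun t ht => by
    have ht' := max_lt_iff.1 (mem_Ioi.1 ht)
    calc ENNReal.ofReal c
        ≤ ENNReal.ofReal (c * t ^ ((p * β + (a - θ * q)) / (p - 1) - 1)) :=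
          ENNReal.ofReal_le_ofReal (le_mul_of_one_le_right hc.le (Real.one_le_rpow ht'.2.le hγ))
      _ ≤ _ := hint 0 t ht'.1.le (by rw [norm_zero]; linarith)
  refine top_unique ?_
  calc ∞ = ENNReal.ofReal c * volume (Ioi (max T 1)) := by
        rw [Real.volume_Ioi, ENNReal.mul_top (ENNReal.ofReal_pos.2 hc).ne']
    _ ≤ _ := le_wolff_of_le_wolffIntegrand measurableSet_Ioi
        (Ioi_subset_Ioi (le_max_of_le_right zero_le_one)) hS

lemma bootstrap [NeZero n] (hp : 1 < p) (hq : 0 < q) {R : EuclideanSpace ℝ (Fin n) → ℝ}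
    (hR : DoubleBounded R) (hu : IsIESolutionWith n β p a q R u) (h : DecaysNoFasterThan u θ) :
    DecaysNoFasterThan u ((θ * q - (p * β + a)) / (p - 1)) := by
  obtain ⟨c, hc, T, hT, hint⟩ := h.exists_le_wolffIntegrand (β := β) (a := a) hp hq
  obtain ⟨CR, hCR, hRb⟩ := hR
  obtain ⟨-, -, hW⟩ := hu
  set γ : ℝ := (p * β + (a - θ * q)) / (p - 1)
  set κ : ℝ := min (2 ^ (γ - 1)) (3 ^ (γ - 1))
  refine ⟨1 / CR * (c * κ), max T 1, by positivity, by positivity, fun x hx => ?_⟩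
  have hx' := max_le_iff.1 hx
  have hx₀ : 0 < ‖x‖ := by linarith
  have hS : ∀ t ∈ Ioo (2 * ‖x‖) (3 * ‖x‖), ENNReal.ofReal (c * κ * ‖x‖ ^ (γ - 1)) ≤
      wolffIntegrand n β p (fun y => ‖y‖ ^ a * u y ^ q) x t := fun t ht => by
    calc ENNReal.ofReal (c * κ * ‖x‖ ^ (γ - 1)) ≤ ENNReal.ofReal (c * t ^ (γ - 1)) := by
          rw [mul_assoc]
          gcongr
          exact min_rpow_mul_le_rpow (by norm_num) hx₀ ht.1.le ht.2.le
      _ ≤ _ := hint x t (by linarith [ht.1]) (by linarith [ht.1])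
  have hWx : ENNReal.ofReal (c * κ * ‖x‖ ^ γ) ≤ wolff n β p (fun y => ‖y‖ ^ a * u y ^ q) x :=
    calc ENNReal.ofReal (c * κ * ‖x‖ ^ γ)
        = ENNReal.ofReal (c * κ * ‖x‖ ^ (γ - 1)) * volume (Ioo (2 * ‖x‖) (3 * ‖x‖)) := by
          rw [Real.volume_Ioo, ← ENNReal.ofReal_mul (by positivity), Real.rpow_sub_one hx₀.ne']
          field_simp
          ring_nf
      _ ≤ _ := le_wolff_of_le_wolffIntegrand measurableSet_Ioo
          (fun t ht => mem_Ioi.2 (by linarith [ht.1])) hS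
  have hγ : -((θ * q - (p * β + a)) / (p - 1)) = γ := by ring
  calc 1 / CR * (c * κ) * ‖x‖ ^ (-((θ * q - (p * β + a)) / (p - 1)))
      = 1 / CR * (c * κ * ‖x‖ ^ γ) := by rw [hγ]; ring
    _ ≤ R x * (wolff n β p (fun y => ‖y‖ ^ a * u y ^ q) x).toReal :=
        mul_le_mul (hRb x).1 ((ENNReal.ofReal_le_iff_le_toReal (hW x).1).1 hWx)
          (by positivity) ((one_div_pos.2 hCR).le.trans (hRb x).1)
    _ = u x := ((hW x).2).symm

lemma iterate_bootstrap [NeZero n] (hp : 1 < p) (hq : p - 1 < q)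
    {R : EuclideanSpace ℝ (Fin n) → ℝ} (hR : DoubleBounded R)
    (hu : IsIESolutionWith n β p a q R u) (h : DecaysNoFasterThan u θ) (k : ℕ) :
    DecaysNoFasterThan u ((p * β + a) / (q - p + 1) +
      (q / (p - 1)) ^ k * (θ - (p * β + a) / (q - p + 1))) := by
  induction k with
  | zero => simpa using h
  | succ k ih =>
    convert ih.bootstrap hp (by linarith) hR hu using 1
    have : p - 1 ≠ 0 := by linarith
    have : q - p + 1 ≠ 0 := by linarith
    rw [pow_succ]
    generalize (q / (p - 1)) ^ k = r
    field_simp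
    ring

end DecaysNoFasterThan

theorem stmt2_no_slower_decay_general
    (n : ℕ) (hn : 3 ≤ n) (p β a q : ℝ)
    (hp1 : 1 < p) (hq1 : p - 1 < q)
    (R u : EuclideanSpace ℝ (Fin n) → ℝ)
    (hR : DoubleBounded R) (hu : IsIESolutionWith n β p a q R u)
    (θ : ℝ) (hθ : θ < (p * β + a) / (q - p + 1)) :
    ¬ ∃ (C M : ℝ), 0 < C ∧ 0 < M ∧
        ∀ x : EuclideanSpace ℝ (Fin n), M ≤ ‖x‖ → C * ‖x‖ ^ (-θ) ≤ u x := by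
  intro h
  have : NeZero n := ⟨by omega⟩
  have hq : 0 < q := by linarith
  have hρ : 1 < q / (p - 1) := by rw [one_lt_div (by linarith)]; exact hq1
  have hdiverge : Tendsto (fun k : ℕ => (p * β + a) / (q - p + 1) +
      (q / (p - 1)) ^ k * (θ - (p * β + a) / (q - p + 1))) atTop atBot :=
    tendsto_atBot_add_const_left _ _
      ((tendsto_pow_atTop_atTop_of_one_lt hρ).atTop_mul_const_of_neg (by linarith))
  obtain ⟨k, hk⟩ := (hdiverge.eventually_le_atBot ((p * β + a - (p - 1)) / q)).exists
  refine (hu.2.2 0).1 (DecaysNoFasterThan.wolff_zero_eq_top hp1 hq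
    (DecaysNoFasterThan.iterate_bootstrap hp1 hq1 hR hu h k) ?_)
  rw [le_div_iff₀ hq] at hk
  linarith

/-- the decay of a positive solution of the integral equation cannot be
slower than the slow rate: for `θ < (pβ+a)/(q-p+1)` there is no lower bound
`u(x) ≥ C|x|^{-θ}` near infinity. -/
theorem stmt2_no_slower_decay
    (n : ℕ) (hn : 3 ≤ n) (p β a q : ℝ)
    (hp1 : 1 < p) (hp2 : p ≤ 2) (hβ : 0 < β)
    (ha0 : 0 ≤ -a) (ha : -a < p * β) (hβn : p * β < n)
    (hq1 : p - 1 < q) (hq2 : (n + a) * (p - 1) / (n - p * β) < q)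
    (R u : EuclideanSpace ℝ (Fin n) → ℝ)
    (hR : DoubleBounded R) (hu : IsIESolutionWith n β p a q R u)
    (θ : ℝ) (hθ : θ < (p * β + a) / (q - p + 1)) :
    ¬ ∃ (C M : ℝ), 0 < C ∧ 0 < M ∧
        ∀ x : EuclideanSpace ℝ (Fin n), M ≤ ‖x‖ → C * ‖x‖ ^ (-θ) ≤ u x :=
  stmt2_no_slower_decay_general n hn p β a q hp1 hq1 R u hR hu θ hθ
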